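/- For every real number z with 0 < z < 1, it holds that z(3 − 3z + z²) + (−3 + 2z + 2z² − 2z³)·ln(1 + z) > 0. -/

import Mathlib

/-! The coefficient of `log (1 + z)` is negative on `(0, 1)`, so an upper bound on the logarithm
suffices. The bound `log x ≤ sinh (log x) = (x - x⁻¹) / 2` for `x ≥ 1`, at `x = 1 + z`, turns the
expression into at least `z² (1 + 2z - 2z³) / (2 (1 + z))`, which is positive. -/

open Real

lemma Real.log_le_sub_inv_div_two {x : ℝ} (hx : 1 ≤ x) : log x ≤ (x - x⁻¹) / 2 :=
  sinh_log (by linarith) ▸ self_le_sinh_iff.2 (log_nonneg hx)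

lemma Real.log_one_add_le {z : ℝ} (hz : 0 ≤ z) : log (1 + z) ≤ z * (z + 2) / (2 * (1 + z)) := by
  calc log (1 + z) ≤ (1 + z - (1 + z)⁻¹) / 2 := log_le_sub_inv_div_two (by linarith)
    _ = z * (z + 2) / (2 * (1 + z)) := by field_simp; ring

theorem stmt_0 (z : ℝ) (hz0 : 0 < z) (hz1 : z < 1) :
    z * (3 - 3*z + z^2) + (-3 + 2*z + 2*z^2 - 2*z^3) * Real.log (1 + z) > 0 := by
  have hcoeff : -3 + 2*z + 2*z^2 - 2*z^3 ≤ 0 := by nlinarith [mul_pos hz0 hz0]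
  have hmargin : 0 < 1 + 2*z - 2*z^3 := by nlinarith [mul_pos hz0 hz0]
  calc z * (3 - 3*z + z^2) + (-3 + 2*z + 2*z^2 - 2*z^3) * log (1 + z)
      ≥ z * (3 - 3*z + z^2) + (-3 + 2*z + 2*z^2 - 2*z^3) * (z * (z + 2) / (2 * (1 + z))) := by
        gcongr _ + ?_
        exact mul_le_mul_of_nonpos_left (log_one_add_le hz0.le) hcoeff
    _ = z^2 * (1 + 2*z - 2*z^3) / (2 * (1 + z)) := by field_simp; ring
    _ > 0 := by positivity
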